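/- arXiv:1906.07342 — 3 statements merged into one kernel-verified Lean document; each statement's English description precedes it below -/
import Mathlib

section
/- For a C¹ solution u of the IEQ-reformulated Camassa-Holm system on the circle—namely ∂ₜu = (1-∂ₓₓ)⁻¹∂ₓ(q - u² + ∂ₓ(u ∂ₓu)) and ∂ₜq = -u ∂ₜu - (∂ₓu)(∂ₓ∂ₜu), with q(·,0) = -(u(·,0)² + uₓ(·,0)²)/2—the quadratic energy H(t) = ∫_Ω u(x,t) q(x,t) dx is constant in time. -/
open intervalIntegral

lemma hasDerivAt_unc_fst (f : ℝ × ℝ → ℝ) (hf : ContDiff ℝ (⊤ : ℕ∞) f) (x t : ℝ) :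
    HasDerivAt (fun y => f (y, t)) (fderiv ℝ f (x, t) ((1 : ℝ), (0 : ℝ))) x := by
  have hd : HasFDerivAt f (fderiv ℝ f (x, t)) (x, t) :=
    (hf.differentiable (by simp) (x, t)).hasFDerivAt
  have hline : HasDerivAt (fun y : ℝ => (y, t)) ((1 : ℝ), (0 : ℝ)) x :=
    (hasDerivAt_id x).prodMk (hasDerivAt_const x t)
  exact hd.comp_hasDerivAt x hline

lemma hasDerivAt_unc_snd (f : ℝ × ℝ → ℝ) (hf : ContDiff ℝ (⊤ : ℕ∞) f) (x t : ℝ) :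
    HasDerivAt (fun s => f (x, s)) (fderiv ℝ f (x, t) ((0 : ℝ), (1 : ℝ))) t := by
  have hd : HasFDerivAt f (fderiv ℝ f (x, t)) (x, t) :=
    (hf.differentiable (by simp) (x, t)).hasFDerivAt
  have hline : HasDerivAt (fun s : ℝ => (x, s)) ((0 : ℝ), (1 : ℝ)) t :=
    (hasDerivAt_const t x).prodMk (hasDerivAt_id t)
  exact hd.comp_hasDerivAt t hline

lemma deriv_periodic_shift {f : ℝ → ℝ} {L : ℝ} (hf : ∀ x, f (x + L) = f x) (x : ℝ) :
    deriv f (x + L) = deriv f x := by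
  conv_rhs => rw [show f = fun y => f (y + L) from funext fun y => (hf y).symm]
  rw [deriv_comp_add_const]

/-- Theorem 2.1: for a C¹ periodic solution of the IEQ-reformulated
Camassa–Holm system, the quadratic energy `H(t) = ∫_Ω u q dx` is constant in time.
Here `w = (1-∂ₓₓ)⁻¹ (q - u² + ∂ₓ(u ∂ₓu))`, so the first equation reads `∂ₜu = ∂ₓ w`. -/
theorem stmt5 (a L : ℝ) (hL : 0 < L) (u q w : ℝ → ℝ → ℝ)
    (hu : ContDiff ℝ (⊤ : ℕ∞) (fun p : ℝ × ℝ => u p.1 p.2))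
    (hq : ContDiff ℝ (⊤ : ℕ∞) (fun p : ℝ × ℝ => q p.1 p.2))
    (hw : ContDiff ℝ (⊤ : ℕ∞) (fun p : ℝ × ℝ => w p.1 p.2))
    (hup : ∀ x t, u (x + L) t = u x t)
    (hqp : ∀ x t, q (x + L) t = q x t)
    (hwp : ∀ x t, w (x + L) t = w x t)
    (hwdef : ∀ x t, w x t - deriv (fun y => deriv (fun z => w z t) y) x
      = q x t - (u x t) ^ 2 + deriv (fun y => u y t * deriv (fun z => u z t) y) x)
    (heq1 : ∀ x t, deriv (fun s => u x s) t = deriv (fun y => w y t) x)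
    (heq2 : ∀ x t, deriv (fun s => q x s) t
      = -(u x t) * deriv (fun s => u x s) t
        - deriv (fun y => u y t) x * deriv (fun y => deriv (fun s => u y s) t) x)
    (hinit : ∀ x, q x 0 = -((u x 0) ^ 2 + (deriv (fun y => u y 0) x) ^ 2) / 2) :
    ∀ t₁ t₂ : ℝ, (∫ x in a..(a + L), u x t₁ * q x t₁)
      = ∫ x in a..(a + L), u x t₂ * q x t₂ := by
  have hab : a ≤ a + L := by linarith
  -- uncurried functions and partial derivative functions
  set U : ℝ × ℝ → ℝ := fun p => u p.1 p.2 with hUdef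
  set Q : ℝ × ℝ → ℝ := fun p => q p.1 p.2 with hQdef
  set W : ℝ × ℝ → ℝ := fun p => w p.1 p.2 with hWdef
  have hUQ : ContDiff ℝ (⊤ : ℕ∞) (fun p : ℝ × ℝ => u p.1 p.2 * q p.1 p.2) := hu.mul hq
  set P : ℝ × ℝ → ℝ := fun p => fderiv ℝ (fun p : ℝ × ℝ => u p.1 p.2 * q p.1 p.2) p ((0:ℝ), (1:ℝ))
    with hPdef
  have hPcont : Continuous P := (hUQ.continuous_fderiv (by simp)).clm_apply continuous_const
  have hPt : ∀ x s, HasDerivAt (fun τ => u x τ * q x τ) (P (x, s)) s := fun x s =>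
    hasDerivAt_unc_snd _ hUQ x s
  set ux : ℝ × ℝ → ℝ := fun p => fderiv ℝ U p ((1:ℝ), (0:ℝ)) with huxdef
  set wx : ℝ × ℝ → ℝ := fun p => fderiv ℝ W p ((1:ℝ), (0:ℝ)) with hwxdef
  have hux_smooth : ContDiff ℝ (⊤ : ℕ∞) ux :=
    (hu.fderiv_right (m := (⊤ : ℕ∞)) (by simp)).clm_apply contDiff_const
  have hwx_smooth : ContDiff ℝ (⊤ : ℕ∞) wx :=
    (hw.fderiv_right (m := (⊤ : ℕ∞)) (by simp)).clm_apply contDiff_const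
  have hux : ∀ x s, HasDerivAt (fun y => u y s) (ux (x, s)) x := fun x s =>
    hasDerivAt_unc_fst _ hu x s
  have hwx : ∀ x s, HasDerivAt (fun y => w y s) (wx (x, s)) x := fun x s =>
    hasDerivAt_unc_fst _ hw x s
  have hdux : ∀ x s, deriv (fun y => u y s) x = ux (x, s) := fun x s => (hux x s).deriv
  have hdwx : ∀ x s, deriv (fun y => w y s) x = wx (x, s) := fun x s => (hwx x s).deriv
  have huxx : ∀ x s, HasDerivAt (fun y => ux (y, s)) (fderiv ℝ ux (x, s) ((1:ℝ),(0:ℝ))) x :=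
    fun x s => hasDerivAt_unc_fst ux hux_smooth x s
  have hwxx : ∀ x s, HasDerivAt (fun y => wx (y, s)) (fderiv ℝ wx (x, s) ((1:ℝ),(0:ℝ))) x :=
    fun x s => hasDerivAt_unc_fst wx hwx_smooth x s
  -- the key pointwise identity: ∂ₜ(uq) = ∂ₓ(w²/2 - wₓ²/2 - u uₓ wₓ)
  have hkey : ∀ x s, P (x, s)
      = deriv (fun y => w y s ^ 2 / 2 - wx (y, s) ^ 2 / 2 - u y s * ux (y, s) * wx (y, s)) x := by
    intro x s
    set Wxx := fderiv ℝ wx (x, s) ((1:ℝ),(0:ℝ)) with hWxx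
    set Uxx := fderiv ℝ ux (x, s) ((1:ℝ),(0:ℝ)) with hUxx
    have hG : HasDerivAt
        (fun y => w y s ^ 2 / 2 - wx (y, s) ^ 2 / 2 - u y s * ux (y, s) * wx (y, s))
        ((2 : ℕ) * w x s ^ 1 * wx (x, s) / 2 - (2 : ℕ) * wx (x, s) ^ 1 * Wxx / 2 -
          ((ux (x, s) * ux (x, s) + u x s * Uxx) * wx (x, s) + u x s * ux (x, s) * Wxx)) x :=
      ((((hwx x s).pow 2).div_const 2).sub (((hwxx x s).pow 2).div_const 2)).sub
        (((hux x s).mul (huxx x s)).mul (hwxx x s))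
    have hut : HasDerivAt (fun τ => u x τ) (fderiv ℝ U (x, s) ((0:ℝ),(1:ℝ))) s :=
      hasDerivAt_unc_snd _ hu x s
    have hqt : HasDerivAt (fun τ => q x τ) (fderiv ℝ Q (x, s) ((0:ℝ),(1:ℝ))) s :=
      hasDerivAt_unc_snd _ hq x s
    have hP' : P (x, s) = fderiv ℝ U (x, s) ((0:ℝ),(1:ℝ)) * q x s
        + u x s * fderiv ℝ Q (x, s) ((0:ℝ),(1:ℝ)) := (hPt x s).unique (hut.mul hqt)
    have hmix : (fun y => deriv (fun s' => u y s') s) = fun y => wx (y, s) :=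
      funext fun y => by rw [heq1 y s, hdwx y s]
    have h1 : fderiv ℝ U (x, s) ((0:ℝ),(1:ℝ)) = wx (x, s) := by
      rw [← hut.deriv, heq1 x s, hdwx x s]
    have h2 : fderiv ℝ Q (x, s) ((0:ℝ),(1:ℝ)) = -(u x s) * wx (x, s) - ux (x, s) * Wxx := by
      rw [← hqt.deriv, heq2 x s, heq1 x s, hdwx x s, hdux x s, hmix, (hwxx x s).deriv]
    have h3 : w x s - Wxx = q x s - u x s ^ 2 + (ux (x, s) * ux (x, s) + u x s * Uxx) := by
      have h := hwdef x s
      rw [show (fun y => deriv (fun z => w z s) y) = fun y => wx (y, s) from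
        funext fun y => hdwx y s, (hwxx x s).deriv,
        show (fun y => u y s * deriv (fun z => u z s) y) = fun y => u y s * ux (y, s) from
        funext fun y => by rw [hdux y s], (show HasDerivAt (fun y => u y s * ux (y, s)) _ x from
          (hux x s).mul (huxx x s)).deriv] at h
      exact h
    rw [hG.deriv, hP', h1, h2]
    linear_combination (-(wx (x, s))) * h3
  -- the spatial integral of the key derivative vanishes by periodicity
  have huxp : ∀ y s, ux (y + L, s) = ux (y, s) := fun y s => by
    rw [← hdux (y + L) s, ← hdux y s]; exact deriv_periodic_shift (fun z => hup z s) y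
  have hwxp : ∀ y s, wx (y + L, s) = wx (y, s) := fun y s => by
    rw [← hdwx (y + L) s, ← hdwx y s]; exact deriv_periodic_shift (fun z => hwp z s) y
  have hzero : ∀ s, (∫ x in a..(a + L), P (x, s)) = 0 := by
    intro s
    have hGs : ContDiff ℝ (⊤ : ℕ∞)
        (fun y => w y s ^ 2 / 2 - wx (y, s) ^ 2 / 2 - u y s * ux (y, s) * wx (y, s)) := by
      have hslice : ContDiff ℝ (⊤ : ℕ∞) (fun y : ℝ => (y, s)) := contDiff_id.prodMk contDiff_const
      have hws : ContDiff ℝ (⊤ : ℕ∞) (fun y => w y s) := hw.comp hslice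
      have hus : ContDiff ℝ (⊤ : ℕ∞) (fun y => u y s) := hu.comp hslice
      have hwxs : ContDiff ℝ (⊤ : ℕ∞) (fun y => wx (y, s)) := hwx_smooth.comp hslice
      have huxs : ContDiff ℝ (⊤ : ℕ∞) (fun y => ux (y, s)) := hux_smooth.comp hslice
      exact (((hws.pow 2).div_const 2).sub ((hwxs.pow 2).div_const 2)).sub
        ((hus.mul huxs).mul hwxs)
    have h1 : (∫ x in a..(a + L), P (x, s))
        = ∫ x in a..(a + L),
            deriv (fun y => w y s ^ 2 / 2 - wx (y, s) ^ 2 / 2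
              - u y s * ux (y, s) * wx (y, s)) x :=
      intervalIntegral.integral_congr (fun x _ => hkey x s)
    rw [h1, intervalIntegral.integral_deriv_eq_sub
      (fun x _ => (hGs.differentiable (by simp)) x)
      ((hGs.continuous_deriv (by simp)).intervalIntegrable _ _)]
    rw [hwp a s, hup a s, hwxp a s, huxp a s, sub_self]
  -- assembly via Fubini
  suffices hmain : ∀ t₁ t₂ : ℝ, t₁ ≤ t₂ → (∫ x in a..(a + L), u x t₁ * q x t₁)
      = ∫ x in a..(a + L), u x t₂ * q x t₂ by
    intro t₁ t₂
    rcases le_total t₁ t₂ with h | h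
    · exact hmain t₁ t₂ h
    · exact (hmain t₂ t₁ h).symm
  intro t₁ t₂ h12
  have hcont : ∀ t, Continuous (fun x => u x t * q x t) := fun t =>
    hUQ.continuous.comp (continuous_id.prodMk continuous_const)
  have hFTC : ∀ x, u x t₂ * q x t₂ - u x t₁ * q x t₁ = ∫ s in t₁..t₂, P (x, s) := fun x =>
    (intervalIntegral.integral_eq_sub_of_hasDerivAt (fun s _ => hPt x s)
      ((hPcont.comp (continuous_const.prodMk continuous_id)).intervalIntegrable _ _)).symm
  have hsub : (∫ x in a..(a + L), u x t₂ * q x t₂) - (∫ x in a..(a + L), u x t₁ * q x t₁)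
      = ∫ x in a..(a + L), (u x t₂ * q x t₂ - u x t₁ * q x t₁) :=
    (intervalIntegral.integral_sub ((hcont t₂).intervalIntegrable _ _)
      ((hcont t₁).intervalIntegrable _ _)).symm
  have h0 : (∫ x in a..(a + L), (u x t₂ * q x t₂ - u x t₁ * q x t₁)) = 0 := by
    rw [intervalIntegral.integral_congr (fun x (_ : x ∈ Set.uIcc a (a+L)) => hFTC x)]
    simp_rw [intervalIntegral.integral_of_le h12]
    rw [intervalIntegral.integral_of_le hab]
    have hint : MeasureTheory.Integrable (Function.uncurry fun x s => P (x, s))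
        ((MeasureTheory.volume.restrict (Set.Ioc a (a + L))).prod
          (MeasureTheory.volume.restrict (Set.Ioc t₁ t₂))) := by
      rw [MeasureTheory.Measure.prod_restrict]
      have hcpt : MeasureTheory.IntegrableOn (Function.uncurry fun x s => P (x, s))
          (Set.Icc a (a + L) ×ˢ Set.Icc t₁ t₂)
          (MeasureTheory.volume.prod MeasureTheory.volume) :=
        (hPcont.continuousOn).integrableOn_compact (isCompact_Icc.prod isCompact_Icc)
      exact hcpt.mono_set (Set.prod_mono Set.Ioc_subset_Icc_self Set.Ioc_subset_Icc_self)
    rw [MeasureTheory.integral_integral_swap hint]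
    have hin : ∀ s, (∫ x in Set.Ioc a (a + L), P (x, s)) = 0 := fun s => by
      rw [← intervalIntegral.integral_of_le hab]; exact hzero s
    simp_rw [hin]
    simp
  linarith
end

section
/- Let D be a skew-symmetric N×N real matrix, and consider one step of the linearized Crank-Nicolson IEQ scheme: given Û ∈ ℝ^N (the extrapolated value), U^{n+1}, Q^{n+1} satisfy (U^{n+1}-U^n)/τ = D·G and (Q^{n+1}-Q^n)/τ = diag(-Û)·(U^{n+1}-U^n)/τ + diag(-D₁Û)·D₁·(U^{n+1}-U^n)/τ, where G = Q^{n+1/2} + diag(-Û)U^{n+1/2} - D₁(diag(-D₁Û)U^{n+1/2}), U^{n+1/2}=(U^{n+1}+U^n)/2, Q^{n+1/2}=(Q^{n+1}+Q^n)/2, and D₁ is skew-symmetric. Then ⟨U^{n+1}, Q^{n+1}⟩ = ⟨U^n, Q^n⟩. -/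
open scoped Matrix

lemma skew_dot {N : ℕ} (A : Matrix (Fin N) (Fin N) ℝ) (hA : A.transpose = -A)
    (v : Fin N → ℝ) : A.mulVec v ⬝ᵥ v = 0 := by
  have h1 : v ⬝ᵥ A.mulVec v = A.vecMul v ⬝ᵥ v := Matrix.dotProduct_mulVec v A v
  have h2 : A.vecMul v = -(A.mulVec v) := by
    rw [← Matrix.mulVec_transpose, hA, Matrix.neg_mulVec]
  have h3 : v ⬝ᵥ A.mulVec v = A.mulVec v ⬝ᵥ v := dotProduct_comm _ _
  rw [h2, neg_dotProduct, ← h3] at h1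
  linarith

lemma skew_dot' {N : ℕ} (A : Matrix (Fin N) (Fin N) ℝ) (hA : A.transpose = -A)
    (v w : Fin N → ℝ) : v ⬝ᵥ A.mulVec w = -(w ⬝ᵥ A.mulVec v) := by
  have h1 : v ⬝ᵥ A.mulVec w = A.vecMul v ⬝ᵥ w := Matrix.dotProduct_mulVec v A w
  have h2 : A.vecMul v = -(A.mulVec v) := by
    rw [← Matrix.mulVec_transpose, hA, Matrix.neg_mulVec]
  rw [h1, h2, neg_dotProduct, dotProduct_comm]

/-- Theorem 5: one step of the linearized Crank–Nicolson IEQ scheme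
preserves the discrete quadratic energy `Eⁿ = ⟨Uⁿ, Qⁿ⟩`. -/
theorem stmt13 {N : ℕ} (τ : ℝ) (hτ : 0 < τ)
    (D D₁ : Matrix (Fin N) (Fin N) ℝ)
    (hD : D.transpose = -D) (hD₁ : D₁.transpose = -D₁)
    (Uhat U0 Q0 U1 Q1 Uh Qh G : Fin N → ℝ)
    (hUh : Uh = fun j => (U1 j + U0 j) / 2)
    (hQh : Qh = fun j => (Q1 j + Q0 j) / 2)
    (hG : G = fun j => Qh j + (-Uhat j) * Uh j
      - D₁.mulVec (fun k => (-(D₁.mulVec Uhat k)) * Uh k) j)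
    (heqU : (fun j => (U1 j - U0 j) / τ) = D.mulVec G)
    (heqQ : ∀ j, (Q1 j - Q0 j) / τ
      = (-Uhat j) * ((U1 j - U0 j) / τ)
        + (-(D₁.mulVec Uhat j)) * D₁.mulVec (fun k => (U1 k - U0 k) / τ) j) :
    U1 ⬝ᵥ Q1 = U0 ⬝ᵥ Q0 := by
  have hτ0 : τ ≠ 0 := ne_of_gt hτ
  set dU : Fin N → ℝ := fun j => U1 j - U0 j with hdU
  set dQ : Fin N → ℝ := fun j => Q1 j - Q0 j with hdQdef
  set w : Fin N → ℝ := fun k => (-(D₁.mulVec Uhat k)) * Uh k with hw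
  -- dU = τ • D *ᵥ G
  have hdUG : dU = τ • D.mulVec G := by
    funext j
    have h := congrFun heqU j
    have : dU j / τ = D.mulVec G j := h
    field_simp at this
    simpa [Pi.smul_apply, smul_eq_mul, mul_comm] using this
  -- dU ⬝ᵥ G = 0
  have hdUG0 : dU ⬝ᵥ G = 0 := by
    rw [hdUG, smul_dotProduct, skew_dot D hD G, smul_zero]
  -- dQ pointwise
  have hdQ : ∀ j, dQ j = (-Uhat j) * dU j + (-(D₁.mulVec Uhat j)) * D₁.mulVec dU j := by
    intro j
    have h := heqQ j
    have hsc : (fun k => (U1 k - U0 k) / τ) = τ⁻¹ • dU := by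
      funext k; simp [hdU, div_eq_inv_mul]
    rw [hsc, Matrix.mulVec_smul] at h
    have h' : dQ j / τ = (-Uhat j) * (dU j / τ)
        + (-(D₁.mulVec Uhat j)) * (τ⁻¹ * D₁.mulVec dU j) := h
    field_simp at h'
    have h2 : dQ j * (τ * τ)
        = ((-Uhat j) * dU j + (-(D₁.mulVec Uhat j)) * D₁.mulVec dU j) * (τ * τ) :=
      by rw [h']; ring
    exact mul_right_cancel₀ (mul_ne_zero hτ0 hτ0) h2
  -- energy split
  have split : U1 ⬝ᵥ Q1 - U0 ⬝ᵥ Q0 = dU ⬝ᵥ Qh + Uh ⬝ᵥ dQ := by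
    simp only [dotProduct, ← Finset.sum_add_distrib, ← Finset.sum_sub_distrib]
    apply Finset.sum_congr rfl
    intro j _
    simp only [hUh, hQh, hdU, hdQdef]
    ring
  -- rewrite Uh ⬝ᵥ dQ
  have hUhdQ : Uh ⬝ᵥ dQ
      = (dU ⬝ᵥ fun j => (-Uhat j) * Uh j) + w ⬝ᵥ D₁.mulVec dU := by
    simp only [dotProduct, ← Finset.sum_add_distrib]
    apply Finset.sum_congr rfl
    intro j _
    rw [hdQ j]
    simp only [hw]
    ring
  have hcross : w ⬝ᵥ D₁.mulVec dU = -(dU ⬝ᵥ D₁.mulVec w) := skew_dot' D₁ hD₁ w dU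
  have hGexp : dU ⬝ᵥ G
      = dU ⬝ᵥ Qh + (dU ⬝ᵥ fun j => (-Uhat j) * Uh j) - dU ⬝ᵥ D₁.mulVec w := by
    simp only [hG, dotProduct, ← Finset.sum_add_distrib, ← Finset.sum_sub_distrib]
    apply Finset.sum_congr rfl
    intro j _
    ring
  have : U1 ⬝ᵥ Q1 - U0 ⬝ᵥ Q0 = dU ⬝ᵥ G := by
    rw [split, hUhdQ, hcross, hGexp]; ring
  rw [hdUG0] at this
  linarith
end

section
/- Consider an s-stage Runge-Kutta method with coefficients (a_{ij}, b_i) satisfying the symplecticity condition b_i a_{ij} + b_j a_{ji} = b_i b_j for all i, j. If the ODE y' = f(y) in ℝ^m has a quadratic invariant Q(y) = yᵀ S y (S symmetric) with ∇Q(y)ᵀ f(y) = 0 for all y, then for any step of the RK method with internal stages Y_i = y_n + τ Σⱼ a_{ij} f(Y_j) and update y_{n+1} = y_n + τ Σᵢ b_i f(Y_i), one has Q(y_{n+1}) = Q(y_n). -/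
open scoped Matrix

private lemma sum_dp {n m : ℕ} (v : Fin n → Fin m → ℝ) (w : Fin m → ℝ) :
    (∑ j, v j) ⬝ᵥ w = ∑ j, v j ⬝ᵥ w := by
  simp only [dotProduct, Finset.sum_apply, Finset.sum_mul]
  rw [Finset.sum_comm]

/-- Cooper; Sanz-Serna: a Runge–Kutta method satisfying the
symplecticity condition `bᵢaᵢⱼ + bⱼaⱼᵢ = bᵢbⱼ` preserves every quadratic invariant
`Q(y) = yᵀ S y` of `y' = f(y)`. -/
theorem stmt14 {s m : ℕ} (a : Fin s → Fin s → ℝ) (b : Fin s → ℝ)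
    (hsymp : ∀ i j, b i * a i j + b j * a j i = b i * b j)
    (f : (Fin m → ℝ) → (Fin m → ℝ)) (S : Matrix (Fin m) (Fin m) ℝ)
    (hS : S.transpose = S)
    (hinv : ∀ y : Fin m → ℝ, 2 * (y ⬝ᵥ S.mulVec (f y)) = 0)
    (τ : ℝ) (hτ : 0 < τ) (y0 y1 : Fin m → ℝ) (Y : Fin s → Fin m → ℝ)
    (hY : ∀ i, Y i = y0 + τ • ∑ j, a i j • f (Y j))
    (hy1 : y1 = y0 + τ • ∑ i, b i • f (Y i)) :
    y1 ⬝ᵥ S.mulVec y1 = y0 ⬝ᵥ S.mulVec y0 := by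
  classical
  set g : Fin s → (Fin m → ℝ) := fun i => f (Y i) with hg
  have hB : ∀ u v : Fin m → ℝ, u ⬝ᵥ S.mulVec v = v ⬝ᵥ S.mulVec u := by
    intro u v
    rw [Matrix.dotProduct_mulVec, ← Matrix.mulVec_transpose, hS, dotProduct_comm]
  have expand : ∀ (c : Fin s → ℝ) (u w : Fin m → ℝ),
      (u + τ • ∑ j, c j • g j) ⬝ᵥ S.mulVec w
        = u ⬝ᵥ S.mulVec w + τ * ∑ j, c j * (g j ⬝ᵥ S.mulVec w) := by
    intro c u w
    rw [add_dotProduct, smul_dotProduct]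
    have : (∑ j, c j • g j) ⬝ᵥ S.mulVec w = ∑ j, c j * (g j ⬝ᵥ S.mulVec w) := by
      rw [sum_dp]
      exact Finset.sum_congr rfl fun j _ => by rw [smul_dotProduct]; simp
    rw [this]; simp
  have hstage : ∀ i, y0 ⬝ᵥ S.mulVec (g i)
      = -(τ * ∑ j, a i j * (g j ⬝ᵥ S.mulVec (g i))) := by
    intro i
    have h0 : Y i ⬝ᵥ S.mulVec (g i) = 0 := by
      have := hinv (Y i); show Y i ⬝ᵥ S.mulVec (f (Y i)) = 0; linarith
    rw [hY i, expand (a i) y0 (g i)] at h0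
    linarith
  set c : Fin s → Fin s → ℝ := fun i j => g i ⬝ᵥ S.mulVec (g j) with hc
  have hcsymm : ∀ i j, c i j = c j i := fun i j => hB (g i) (g j)
  have E : ∀ w, y1 ⬝ᵥ S.mulVec w
      = y0 ⬝ᵥ S.mulVec w + τ * ∑ i, b i * (g i ⬝ᵥ S.mulVec w) := by
    intro w; rw [hy1]; exact expand b y0 w
  -- expand Q(y1)
  have step1 : y1 ⬝ᵥ S.mulVec y1
      = y0 ⬝ᵥ S.mulVec y0 + 2 * τ * ∑ i, b i * (y0 ⬝ᵥ S.mulVec (g i))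
        + τ * ∑ i, b i * (τ * ∑ j, b j * c j i) := by
    rw [E y1]
    have h1 : y0 ⬝ᵥ S.mulVec y1
        = y0 ⬝ᵥ S.mulVec y0 + τ * ∑ i, b i * (y0 ⬝ᵥ S.mulVec (g i)) := by
      rw [hB y0 y1, E y0]
      congr 2
      exact Finset.sum_congr rfl fun i _ => by rw [hB (g i) y0]
    have h2 : ∀ i, g i ⬝ᵥ S.mulVec y1
        = y0 ⬝ᵥ S.mulVec (g i) + τ * ∑ j, b j * c j i := by
      intro i; rw [hB (g i) y1, E (g i)]
    rw [h1]
    have h3 : (∑ i, b i * (g i ⬝ᵥ S.mulVec y1))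
        = ∑ i, b i * (y0 ⬝ᵥ S.mulVec (g i)) + ∑ i, b i * (τ * ∑ j, b j * c j i) := by
      rw [← Finset.sum_add_distrib]
      exact Finset.sum_congr rfl fun i _ => by rw [h2 i]; ring
    rw [h3]; ring
  rw [step1]
  -- substitute the stage invariance
  have hlin : ∑ i, b i * (y0 ⬝ᵥ S.mulVec (g i))
      = -(τ * ∑ i, ∑ j, b i * (a i j * c j i)) := by
    rw [Finset.mul_sum, ← Finset.sum_neg_distrib]
    refine Finset.sum_congr rfl fun i _ => ?_
    simp only [hc]
    rw [hstage i, ← Finset.mul_sum]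
    ring
  -- the symplecticity cancellation
  have key : ∑ i, b i * (τ * ∑ j, b j * c j i)
      = 2 * τ * ∑ i, ∑ j, b i * (a i j * c j i) := by
    have lhs : ∑ i, b i * (τ * ∑ j, b j * c j i)
        = τ * ∑ i, ∑ j, b i * b j * c j i := by
      rw [Finset.mul_sum]
      exact Finset.sum_congr rfl fun i _ => by
        rw [Finset.mul_sum, Finset.mul_sum, Finset.mul_sum]
        exact Finset.sum_congr rfl fun j _ => by ring
    rw [lhs]
    have split : ∑ i, ∑ j, b i * b j * c j i
        = ∑ i, ∑ j, b i * (a i j * c j i) + ∑ i, ∑ j, b j * (a j i * c j i) := by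
      rw [← Finset.sum_add_distrib]
      refine Finset.sum_congr rfl fun i _ => ?_
      rw [← Finset.sum_add_distrib]
      refine Finset.sum_congr rfl fun j _ => ?_
      linear_combination (-(c j i)) * hsymp i j
    have swap : ∑ i, ∑ j, b j * (a j i * c j i)
        = ∑ i, ∑ j, b i * (a i j * c j i) := by
      rw [Finset.sum_comm]
      refine Finset.sum_congr rfl fun i _ => Finset.sum_congr rfl fun j _ => ?_
      rw [hcsymm i j]
    rw [split, swap]; ring
  rw [hlin, key]; ring
end
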